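/- Let x^{(1)} ≤ ⋯ ≤ x^{(k)} be basis elements of C(□^n) in the componentwise partial order. Then CS(∗^{k−1}(x^{(1)} ⊗ ⋯ ⊗ x^{(k)})) = ∗^{k−1}(CS(x^{(1)}) ⊗ ⋯ ⊗ CS(x^{(k)})), where ∗^{k−1} denotes the (left-parenthesized) iterated cubical join on the left and the iterated simplicial join on the right. -/

import Mathlib

/-- The three cells of the interval: `[0]`, `[0,1]` (written `mid`), and `[1]`. -/
inductive CubeF : Type
  | zero : CubeF
  | mid : CubeF
  | one : CubeF
  deriving DecidableEq

namespace CartanSerre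

/-- Basis elements of the cubical chain complex `C(□^n)`: tensors `x_1 ⊗ ⋯ ⊗ x_n`. -/
abbrev CubeB (n : ℕ) := Fin n → CubeF
/-- The cubical chain complex `C(□^n)` (as the free ℤ-module on its basis). -/
abbrev CubeChain (n : ℕ) := CubeB n →₀ ℤ
/-- `C(□^n) ⊗ C(□^n)`, modeled as the free ℤ-module on pairs of basis elements. -/
abbrev CubeChain2 (n : ℕ) := (CubeB n × CubeB n) →₀ ℤ
/-- Basis elements of `C(Δ^n)`: strictly increasing tuples `[v_0, …, v_m]` with
`v_i ∈ {0,…,n}`, i.e. nonempty finite subsets of `Fin (n+1)` (`∅` is not used). -/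
abbrev SimpB (n : ℕ) := Finset (Fin (n + 1))
/-- The normalized simplicial chain complex `C(Δ^n)`. -/
abbrev SimpChain (n : ℕ) := SimpB n →₀ ℤ
/-- `C(Δ^n) ⊗ C(Δ^n)`. -/
abbrev SimpChain2 (n : ℕ) := (SimpB n × SimpB n) →₀ ℤ

/-- Degree of a cubical basis element: the number of factors equal to `[0,1]`. -/
def cubeDeg {n : ℕ} (x : CubeB n) : ℕ :=
  (Finset.univ.filter fun i => x i = CubeF.mid).card

/-- Degree of a simplicial basis element `[v_0, …, v_m]`, namely `m`. -/
def simpDeg {n : ℕ} (s : SimpB n) : ℕ := s.card - 1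

/-- The cubical boundary on a basis element. -/
noncomputable def cubeBdFun (n : ℕ) (x : CubeB n) : CubeChain n :=
  ∑ i ∈ Finset.univ.filter (fun i => x i = CubeF.mid),
    ((-1 : ℤ) ^ (Finset.univ.filter fun j => j < i ∧ x j = CubeF.mid).card) •
      (Finsupp.single (Function.update x i CubeF.one) 1 -
        Finsupp.single (Function.update x i CubeF.zero) 1)

/-- The cubical boundary `∂ : C(□^n) → C(□^n)`. -/
noncomputable def cubeBd (n : ℕ) : CubeChain n →ₗ[ℤ] CubeChain n :=
  Finsupp.lift (CubeChain n) ℤ (CubeB n) (cubeBdFun n)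

/-- The (normalized) simplicial boundary on a basis element. -/
noncomputable def simpBdFun (n : ℕ) (s : SimpB n) : SimpChain n :=
  if 2 ≤ s.card then
    ∑ v ∈ s, ((-1 : ℤ) ^ (s.filter fun w => w < v).card) • Finsupp.single (s.erase v) 1
  else 0

/-- The simplicial boundary `∂ : C(Δ^n) → C(Δ^n)`. -/
noncomputable def simpBd (n : ℕ) : SimpChain n →ₗ[ℤ] SimpChain n :=
  Finsupp.lift (SimpChain n) ℤ (SimpB n) (simpBdFun n)

/-- `p(x) - 1` (0-indexed): the first position of a factor `[0]`, or `n` if there is none. -/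
def pIdx {n : ℕ} (x : CubeB n) : Fin (n + 1) :=
  ⟨(List.ofFn x).findIdx (fun c => decide (c = CubeF.zero)), by
    have h : (List.ofFn x).findIdx (fun c => decide (c = CubeF.zero)) ≤ (List.ofFn x).length :=
      List.findIdx_le_length
    simp only [List.length_ofFn] at h
    omega⟩

/-- The vertex set `[q_1 - 1, …, q_m - 1, p(x) - 1]` of the image of `x` under `CS`. -/
def csSet {n : ℕ} (x : CubeB n) : SimpB n :=
  insert (pIdx x) ((Finset.univ.filter fun i => x i = CubeF.mid).image Fin.castSucc)

/-- The Cartan–Serre map `CS` on a cubical basis element. -/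
noncomputable def csFun (n : ℕ) (x : CubeB n) : SimpChain n :=
  if ∃ i j : Fin n, i < j ∧ x i = CubeF.zero ∧ x j = CubeF.mid then 0
  else Finsupp.single (csSet x) 1

/-- The Cartan–Serre chain map `CS : C(□^n) → C(Δ^n)`. -/
noncomputable def csL (n : ℕ) : CubeChain n →ₗ[ℤ] SimpChain n :=
  Finsupp.lift (SimpChain n) ℤ (CubeB n) (csFun n)

/-- The cubical counit `ε_□ : C(□^n) → ℤ`. -/
noncomputable def cubeEps (n : ℕ) : CubeChain n →ₗ[ℤ] ℤ :=
  Finsupp.lift ℤ ℤ (CubeB n) (fun x => if cubeDeg x = 0 then (1 : ℤ) else 0)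

/-- The simplicial counit `ε_Δ : C(Δ^n) → ℤ`. -/
noncomputable def simpEps (n : ℕ) : SimpChain n →ₗ[ℤ] ℤ :=
  Finsupp.lift ℤ ℤ (SimpB n) (fun s => if s.card = 1 then (1 : ℤ) else 0)

/-- Tensor product of two elements of free modules, in the product-basis model. -/
noncomputable def tensorF {α β : Type*} (a : α →₀ ℤ) (b : β →₀ ℤ) : (α × β) →₀ ℤ :=
  a.sum fun i r => b.sum fun j s => Finsupp.single (i, j) (r * s)

/-- Left factor of the Serre diagonal summand indexed by `S`:
factors in `S` contribute `[0,1]`, the other `[0,1]`-factors contribute `[0]`. -/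
def serreL {n : ℕ} (x : CubeB n) (S : Finset (Fin n)) : CubeB n := fun i =>
  if x i = CubeF.mid then (if i ∈ S then CubeF.mid else CubeF.zero) else x i

/-- Right factor of the Serre diagonal summand indexed by `S`. -/
def serreR {n : ℕ} (x : CubeB n) (S : Finset (Fin n)) : CubeB n := fun i =>
  if x i = CubeF.mid then (if i ∈ S then CubeF.one else CubeF.mid) else x i

/-- Koszul sign exponent of the Serre diagonal summand indexed by `S`. -/
def serreSign {n : ℕ} (x : CubeB n) (S : Finset (Fin n)) : ℕ :=
  ((Finset.univ : Finset (Fin n × Fin n)).filter fun p =>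
    p.1 < p.2 ∧ x p.1 = CubeF.mid ∧ p.1 ∉ S ∧ p.2 ∈ S).card

/-- The Serre diagonal `Δ_□` on a basis element: the tensor product (with Koszul
signs) of `Δ[0] = [0]⊗[0]`, `Δ[1] = [1]⊗[1]`, `Δ[0,1] = [0]⊗[0,1] + [0,1]⊗[1]`. -/
noncomputable def serreDiagFun (n : ℕ) (x : CubeB n) : CubeChain2 n :=
  ∑ S ∈ (Finset.univ.filter fun i => x i = CubeF.mid).powerset,
    ((-1 : ℤ) ^ serreSign x S) • Finsupp.single (serreL x S, serreR x S) 1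

/-- The Serre diagonal `Δ_□ : C(□^n) → C(□^n) ⊗ C(□^n)`. -/
noncomputable def serreDiag (n : ℕ) : CubeChain n →ₗ[ℤ] CubeChain2 n :=
  Finsupp.lift (CubeChain2 n) ℤ (CubeB n) (serreDiagFun n)

/-- The Alexander–Whitney coproduct on a basis element:
`Δ_AW [v_0,…,v_m] = Σ_i [v_0,…,v_i] ⊗ [v_i,…,v_m]`. -/
noncomputable def awFun (n : ℕ) (s : SimpB n) : SimpChain2 n :=
  ∑ v ∈ s, Finsupp.single (s.filter fun w => w ≤ v, s.filter fun w => v ≤ w) 1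

/-- The Alexander–Whitney coproduct `Δ_AW : C(Δ^n) → C(Δ^n) ⊗ C(Δ^n)`. -/
noncomputable def awDiag (n : ℕ) : SimpChain n →ₗ[ℤ] SimpChain2 n :=
  Finsupp.lift (SimpChain2 n) ℤ (SimpB n) (awFun n)

/-- `CS ⊗ CS : C(□^n) ⊗ C(□^n) → C(Δ^n) ⊗ C(Δ^n)` (no Koszul signs: `CS` has degree 0). -/
noncomputable def cs2L (n : ℕ) : CubeChain2 n →ₗ[ℤ] SimpChain2 n :=
  Finsupp.lift (SimpChain2 n) ℤ (CubeB n × CubeB n)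
    (fun p => tensorF (csFun n p.1) (csFun n p.2))

/-- The join on single cube factors: `[0] ∗ [1] = [0,1]`, `[1] ∗ [0] = -[0,1]`,
all other joins of basis elements vanish (the outcome factor being `[0,1]`). -/
def joinF : CubeF → CubeF → ℤ
  | CubeF.zero, CubeF.one => 1
  | CubeF.one, CubeF.zero => -1
  | _, _ => 0

/-- The cubical join `∗` on basis elements. -/
noncomputable def cubeJoinFun (n : ℕ) (x y : CubeB n) : CubeChain n :=
  ((-1 : ℤ) ^ cubeDeg x) •
    ∑ l : Fin n,
      ((if (∀ j, j < l → y j ≠ CubeF.mid) ∧ (∀ j, l < j → x j ≠ CubeF.mid) then (1 : ℤ) else 0) *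
          joinF (x l) (y l)) •
        Finsupp.single (fun j => if j < l then x j else if j = l then CubeF.mid else y j) 1

/-- The cubical join, extended bilinearly to chains. -/
noncomputable def cubeJoinC (n : ℕ) (a b : CubeChain n) : CubeChain n :=
  a.sum fun x r => b.sum fun y s => (r * s) • cubeJoinFun n x y

/-- The simplicial join `∗` on basis elements: `0` if the vertex sets meet, and
otherwise `(-1)^{p + |σ|}` times the union, `|σ|` counting the inversions. -/
noncomputable def simpJoinFun (n : ℕ) (s t : SimpB n) : SimpChain n :=
  if s ∩ t = ∅ ∧ s.Nonempty ∧ t.Nonempty then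
    ((-1 : ℤ) ^ ((s.card - 1) + ((s ×ˢ t).filter fun p => p.2 < p.1).card)) •
      Finsupp.single (s ∪ t) 1
  else 0

/-- The simplicial join, extended bilinearly to chains. -/
noncomputable def simpJoinC (n : ℕ) (a b : SimpChain n) : SimpChain n :=
  a.sum fun s r => b.sum fun t u => (r * u) • simpJoinFun n s t

/-- The linear order `[0] < [0,1] < [1]` on interval cells, via `0 < 1 < 2`. -/
def cellVal : CubeF → ℕ
  | CubeF.zero => 0
  | CubeF.mid => 1
  | CubeF.one => 2

/-- The componentwise partial order on cubical basis elements,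
with `[0] < [0,1] < [1]` on each factor. -/
def cubeLe {n : ℕ} (x y : CubeB n) : Prop := ∀ i, cellVal (x i) ≤ cellVal (y i)

/-- Left-parenthesized iterated join of a nonempty list (the base case `[]` is junk). -/
noncomputable def foldJoin {C : Type*} (join : C → C → C) (z : C) : List C → C
  | [] => z
  | a :: l => l.foldl join a

/-- Left-parenthesized iterated cubical join `∗^{k}` of `k+1` basis elements. -/
noncomputable def iterCubeJoin (n k : ℕ) (f : Fin (k + 1) → CubeB n) : CubeChain n :=
  foldJoin (cubeJoinC n) 0 (List.ofFn fun i : Fin (k + 1) => (Finsupp.single (f i) 1 : CubeChain n))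

/-- Left-parenthesized iterated simplicial join `∗^{k}` of `k+1` chains. -/
noncomputable def iterSimpJoin (n k : ℕ) (g : Fin (k + 1) → SimpChain n) : SimpChain n :=
  foldJoin (simpJoinC n) 0 (List.ofFn g)

/-- The iterated Serre diagonal `Δ_□^k` on a basis element, with `k+1` output factors
(iterated on the last factor; this is unambiguous by coassociativity, and no Koszul
signs appear since `Δ_□` has degree `0`). -/
noncomputable def serreIterFun (n : ℕ) : (k : ℕ) → CubeB n → ((Fin (k + 1) → CubeB n) →₀ ℤ)
  | 0, x => Finsupp.single (fun _ => x) 1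
  | k + 1, x =>
    (serreIterFun n k x).sum fun f c =>
      (serreDiagFun n (f (Fin.last k))).sum fun p d =>
        Finsupp.single
          (fun i : Fin (k + 2) =>
            if h : (i : ℕ) < k then f ⟨(i : ℕ), by omega⟩
            else if (i : ℕ) = k then p.1 else p.2) (c * d)

/-- The iterated Serre diagonal `Δ_□^k : C(□^n) → C(□^n)^{⊗(k+1)}`. -/
noncomputable def serreIter (n k : ℕ) : CubeChain n →ₗ[ℤ] ((Fin (k + 1) → CubeB n) →₀ ℤ) :=
  Finsupp.lift _ ℤ (CubeB n) (serreIterFun n k)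

/-- The iterated Alexander–Whitney coproduct `Δ_AW^k` on a basis element. -/
noncomputable def awIterFun (n : ℕ) : (k : ℕ) → SimpB n → ((Fin (k + 1) → SimpB n) →₀ ℤ)
  | 0, s => Finsupp.single (fun _ => s) 1
  | k + 1, s =>
    (awIterFun n k s).sum fun f c =>
      (awFun n (f (Fin.last k))).sum fun p d =>
        Finsupp.single
          (fun i : Fin (k + 2) =>
            if h : (i : ℕ) < k then f ⟨(i : ℕ), by omega⟩
            else if (i : ℕ) = k then p.1 else p.2) (c * d)

/-- The iterated Alexander–Whitney coproduct `Δ_AW^k : C(Δ^n) → C(Δ^n)^{⊗(k+1)}`. -/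
noncomputable def awIter (n k : ℕ) : SimpChain n →ₗ[ℤ] ((Fin (k + 1) → SimpB n) →₀ ℤ) :=
  Finsupp.lift _ ℤ (SimpB n) (awIterFun n k)

/-- The action of a permutation `τ` on a `k`-fold tensor of basis elements,
with the Koszul sign determined by the degrees of the factors it transposes. -/
noncomputable def koszulPermFun {α : Type*} (deg : α → ℕ) {k : ℕ} (τ : Equiv.Perm (Fin k))
    (f : Fin k → α) : (Fin k → α) →₀ ℤ :=
  ((-1 : ℤ) ^ ∑ p ∈ (Finset.univ : Finset (Fin k × Fin k)).filter
      (fun p => p.1 < p.2 ∧ τ p.2 < τ p.1), deg (f (τ p.1)) * deg (f (τ p.2))) •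
    Finsupp.single (fun i => f (τ i)) 1

/-- The action of a permutation on `k`-fold tensors, with Koszul signs. -/
noncomputable def koszulPerm {α : Type*} (deg : α → ℕ) {k : ℕ} (τ : Equiv.Perm (Fin k)) :
    ((Fin k → α) →₀ ℤ) →ₗ[ℤ] ((Fin k → α) →₀ ℤ) :=
  Finsupp.lift _ ℤ (Fin k → α) (koszulPermFun deg τ)

/-- Tensor product of an `r`-tuple of elements of a free module, product-basis model. -/
noncomputable def tensorPi {r : ℕ} {α : Type*} [DecidableEq α] (c : Fin r → (α →₀ ℤ)) :
    (Fin r → α) →₀ ℤ :=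
  ∑ g ∈ Fintype.piFinset (fun i => (c i).support), Finsupp.single g (∏ i, (c i) (g i))

/-- `CS^{⊗ r} : C(□^n)^{⊗ r} → C(Δ^n)^{⊗ r}` (no Koszul signs: `CS` has degree 0). -/
noncomputable def csTensor (n r : ℕ) : ((Fin r → CubeB n) →₀ ℤ) →ₗ[ℤ] ((Fin r → SimpB n) →₀ ℤ) :=
  Finsupp.lift _ ℤ (Fin r → CubeB n) (fun f => tensorPi fun i => csFun n (f i))

/-- The index in `Fin (k_1 + ⋯ + k_r)` of the `j`-th tensor factor of the `i`-th block. -/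
def blockIdx {r : ℕ} (K : Fin r → ℕ) {m : ℕ} (hm : m + 1 = ∑ i, K i) (i : Fin r)
    (j : Fin (K i)) : Fin (m + 1) :=
  ⟨(∑ j' ∈ Finset.univ.filter (fun j' => j' < i), K j') + (j : ℕ), by
    have h2 : (j : ℕ) < K i := j.isLt
    have h3 : K i + ∑ j' ∈ Finset.univ.filter (fun j' => j' < i), K j' ≤ ∑ i', K i' := by
      rw [← Finset.sum_insert (a := i) (s := Finset.univ.filter (fun j' => j' < i)) (by simp)]
      exact Finset.sum_le_sum_of_subset (Finset.subset_univ _)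
    omega⟩

/-- A `(k_1, …, k_r)`-shuffle: a permutation increasing on each block. -/
def IsShuffle {r : ℕ} (K : Fin r → ℕ) {m : ℕ} (hm : m + 1 = ∑ i, K i)
    (σ : Equiv.Perm (Fin (m + 1))) : Prop :=
  ∀ (i : Fin r) (j j' : Fin (K i)), j < j' → σ (blockIdx K hm i j) < σ (blockIdx K hm i j')

/-- Total degree of the `i`-th block of a `k`-fold cubical tensor. -/
def cubeBlockDeg {n r : ℕ} (K : Fin r → ℕ) {m : ℕ} (hm : m + 1 = ∑ i, K i)
    (f : Fin (m + 1) → CubeB n) (i : Fin r) : ℕ :=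
  ∑ j : Fin (K i), cubeDeg (f (blockIdx K hm i j))

/-- Total degree of the `i`-th block of a `k`-fold simplicial tensor. -/
def simpBlockDeg {n r : ℕ} (K : Fin r → ℕ) {m : ℕ} (hm : m + 1 = ∑ i, K i)
    (f : Fin (m + 1) → SimpB n) (i : Fin r) : ℕ :=
  ∑ j : Fin (K i), simpDeg (f (blockIdx K hm i j))

/-- `∗^{k_1 - 1} ⊗ ⋯ ⊗ ∗^{k_r - 1}` on a cubical `k`-fold tensor basis element, with
the Koszul sign for applying the degree-`(k_i - 1)` maps across the earlier blocks. -/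
noncomputable def cubeBlockJoinFun (n r : ℕ) (K : Fin r → ℕ) {m : ℕ} (hm : m + 1 = ∑ i, K i)
    (f : Fin (m + 1) → CubeB n) : (Fin r → CubeB n) →₀ ℤ :=
  ((-1 : ℤ) ^ ∑ p ∈ (Finset.univ : Finset (Fin r × Fin r)).filter (fun p => p.1 < p.2),
      (K p.2 - 1) * cubeBlockDeg K hm f p.1) •
    tensorPi (fun i : Fin r =>
      foldJoin (cubeJoinC n) 0
        (List.ofFn fun j : Fin (K i) => (Finsupp.single (f (blockIdx K hm i j)) 1 : CubeChain n)))

/-- `∗^{k_1 - 1} ⊗ ⋯ ⊗ ∗^{k_r - 1} : C(□^n)^{⊗ k} → C(□^n)^{⊗ r}`. -/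
noncomputable def cubeBlockJoin (n r : ℕ) (K : Fin r → ℕ) {m : ℕ} (hm : m + 1 = ∑ i, K i) :
    ((Fin (m + 1) → CubeB n) →₀ ℤ) →ₗ[ℤ] ((Fin r → CubeB n) →₀ ℤ) :=
  Finsupp.lift _ ℤ (Fin (m + 1) → CubeB n) (cubeBlockJoinFun n r K hm)

/-- `∗^{k_1 - 1} ⊗ ⋯ ⊗ ∗^{k_r - 1}` on a simplicial `k`-fold tensor basis element. -/
noncomputable def simpBlockJoinFun (n r : ℕ) (K : Fin r → ℕ) {m : ℕ} (hm : m + 1 = ∑ i, K i)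
    (f : Fin (m + 1) → SimpB n) : (Fin r → SimpB n) →₀ ℤ :=
  ((-1 : ℤ) ^ ∑ p ∈ (Finset.univ : Finset (Fin r × Fin r)).filter (fun p => p.1 < p.2),
      (K p.2 - 1) * simpBlockDeg K hm f p.1) •
    tensorPi (fun i : Fin r =>
      foldJoin (simpJoinC n) 0
        (List.ofFn fun j : Fin (K i) => (Finsupp.single (f (blockIdx K hm i j)) 1 : SimpChain n)))

/-- `∗^{k_1 - 1} ⊗ ⋯ ⊗ ∗^{k_r - 1} : C(Δ^n)^{⊗ k} → C(Δ^n)^{⊗ r}`. -/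
noncomputable def simpBlockJoin (n r : ℕ) (K : Fin r → ℕ) {m : ℕ} (hm : m + 1 = ∑ i, K i) :
    ((Fin (m + 1) → SimpB n) →₀ ℤ) →ₗ[ℤ] ((Fin r → SimpB n) →₀ ℤ) :=
  Finsupp.lift _ ℤ (Fin (m + 1) → SimpB n) (simpBlockJoinFun n r K hm)

/-- A chain is homogeneous of degree `m` if its support is contained in degree-`m` basis elements. -/
def cubeHomog (n m : ℕ) (c : CubeChain n) : Prop := ∀ x ∈ c.support, cubeDeg x = m

/-- A simplicial chain is homogeneous of degree `m` if every basis element in its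
support is a strictly increasing tuple `[v_0, …, v_m]`, i.e. has `m+1` vertices. -/
def simpHomog (n m : ℕ) (c : SimpChain n) : Prop := ∀ s ∈ c.support, s.card = m + 1

end CartanSerre

/-!
By induction on `k` and bilinearity of the joins, it suffices that `CS(x ∗ y) = CS(x) ∗ CS(y)`
for basis elements `x ≤ y`, because every basis element in the support of
`x⁽¹⁾ ∗ ⋯ ∗ x⁽ʲ⁾` is again `≤ x⁽ʲ⁾`. For `x ≤ y`, at most one summand of `x ∗ y` survives `CS`:
the one at the first `[0]` of `x`, say at `l`, and only if `y` is `[1]` there and all `[0,1]` of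
`y` lie after `l`. Such an `l` exists exactly when `CS(x)` and `CS(y)` have disjoint vertex sets;
then every vertex of `CS(x)` is `≤ l` and every vertex of `CS(y)` is `> l`, so the simplicial join
carries no shuffle sign and both sides are `(-1)^{|x|}` times the simplex on the union of the two
vertex sets.
-/

namespace CartanSerre

open Finsupp

variable {n : ℕ}

section Order

variable {x y z : CubeB n}

lemma cubeLe_refl (x : CubeB n) : cubeLe x x := fun _ => le_rfl

lemma cubeLe.trans (hxy : cubeLe x y) (hyz : cubeLe y z) : cubeLe x z :=
  fun i => (hxy i).trans (hyz i)

lemma cubeLe.eq_zero (hxy : cubeLe x y) {i : Fin n} (hy : y i = CubeF.zero) :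
    x i = CubeF.zero := by
  have := hxy i
  cases hx : x i <;> simp_all [cellVal]

lemma cubeLe.eq_one (hxy : cubeLe x y) {i : Fin n} (hx : x i = CubeF.one) :
    y i = CubeF.one := by
  have := hxy i
  cases hy : y i <;> simp_all [cellVal]

lemma cubeLe.eq_zero_and_eq_one_of_joinF_ne_zero (hxy : cubeLe x y) {l : Fin n}
    (h : joinF (x l) (y l) ≠ 0) : x l = CubeF.zero ∧ y l = CubeF.one := by
  have := hxy l
  cases hx : x l <;> cases hy : y l <;> simp_all [cellVal, joinF]

end Order

section FirstZero

variable {x y : CubeB n}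

lemma ne_zero_of_lt_pIdx {j : Fin n} (h : (j : ℕ) < pIdx x) : x j ≠ CubeF.zero := by
  simpa using List.not_of_lt_findIdx (p := fun c => decide (c = CubeF.zero)) h

lemma pIdx_le {j : Fin n} (h : x j = CubeF.zero) : (pIdx x : ℕ) ≤ j :=
  not_lt.1 fun hlt => ne_zero_of_lt_pIdx hlt h

lemma eq_zero_at_pIdx (h : (pIdx x : ℕ) < n) : x ⟨pIdx x, h⟩ = CubeF.zero := by
  have := List.findIdx_getElem (p := fun c => decide (c = CubeF.zero)) (xs := List.ofFn x)
    (w := by simpa [pIdx] using h)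
  simpa [pIdx] using this

lemma le_pIdx {i : Fin (n + 1)} (h : ∀ j : Fin n, (j : ℕ) < i → x j ≠ CubeF.zero) :
    i ≤ pIdx x := by
  by_contra! hlt
  have hpn : (pIdx x : ℕ) < n := by omega
  exact h _ hlt (eq_zero_at_pIdx hpn)

lemma pIdx_eq {i : Fin (n + 1)} (h1 : ∀ j : Fin n, (j : ℕ) < i → x j ≠ CubeF.zero)
    (h2 : ∀ h : (i : ℕ) < n, x ⟨i, h⟩ = CubeF.zero) : pIdx x = i := by
  refine le_antisymm ?_ (le_pIdx h1)
  by_cases hi : (i : ℕ) < n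
  · exact pIdx_le (h2 hi)
  · exact Fin.le_def.2 (by omega)

lemma cubeLe.pIdx_le_pIdx (hxy : cubeLe x y) : pIdx x ≤ pIdx y :=
  le_pIdx fun _ hj hx => ne_zero_of_lt_pIdx hj (hxy.eq_zero hx)

end FirstZero

abbrev HasZeroBeforeMid (x : CubeB n) : Prop :=
  ∃ i j : Fin n, i < j ∧ x i = CubeF.zero ∧ x j = CubeF.mid

lemma csFun_def (x : CubeB n) :
    csFun n x = if HasZeroBeforeMid x then 0 else single (csSet x) 1 := rfl

lemma csL_single (x : CubeB n) : csL n (single x 1) = csFun n x := by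
  simp [csL]

def mids (x : CubeB n) : Finset (Fin n) := Finset.univ.filter fun i => x i = CubeF.mid

section CartanSerreSet

variable {x : CubeB n}

lemma mem_mids {i : Fin n} : i ∈ mids x ↔ x i = CubeF.mid := by
  simp [mids]

lemma mem_csSet {a : Fin (n + 1)} :
    a ∈ csSet x ↔ a = pIdx x ∨ ∃ i : Fin n, x i = CubeF.mid ∧ i.castSucc = a := by
  simp [csSet]

lemma pIdx_mem_csSet (x : CubeB n) : pIdx x ∈ csSet x := Finset.mem_insert_self _ _

lemma csSet_nonempty (x : CubeB n) : (csSet x).Nonempty := ⟨_, pIdx_mem_csSet x⟩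

lemma lt_pIdx_of_eq_mid (hx : ¬ HasZeroBeforeMid x) {j : Fin n} (hj : x j = CubeF.mid) :
    (j : ℕ) < pIdx x := by
  by_contra! h
  have hpn : (pIdx x : ℕ) < n := h.trans_lt j.isLt
  have hne : (pIdx x : ℕ) ≠ j := fun he => by
    have h0 := eq_zero_at_pIdx hpn
    rw [show (⟨pIdx x, hpn⟩ : Fin n) = j from Fin.ext he, hj] at h0
    exact CubeF.noConfusion h0
  exact hx ⟨⟨pIdx x, hpn⟩, j, Fin.lt_def.2 (by simp; omega), eq_zero_at_pIdx hpn, hj⟩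

lemma card_csSet (hx : ¬ HasZeroBeforeMid x) : (csSet x).card = cubeDeg x + 1 := by
  rw [csSet, Finset.card_insert_of_notMem, Finset.card_image_of_injective _
    (Fin.castSucc_injective n), cubeDeg]
  simp only [Finset.mem_image, Finset.mem_filter, Finset.mem_univ, true_and, not_exists,
    not_and]
  intro j hj he
  have := lt_pIdx_of_eq_mid hx hj
  rw [← he] at this
  simp at this

end CartanSerreSet

def joinSummand (x y : CubeB n) (l : Fin n) : CubeB n :=
  fun j => if j < l then x j else if j = l then CubeF.mid else y j

def joinCoeff (x y : CubeB n) (l : Fin n) : ℤ :=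
  (if (∀ j, j < l → y j ≠ CubeF.mid) ∧ (∀ j, l < j → x j ≠ CubeF.mid) then 1 else 0) *
    joinF (x l) (y l)

lemma cubeJoinFun_eq_sum (x y : CubeB n) :
    cubeJoinFun n x y =
      ((-1 : ℤ) ^ cubeDeg x) • ∑ l, joinCoeff x y l • single (joinSummand x y l) 1 := rfl

section JoinSummand

variable {x y : CubeB n} {l j : Fin n}

lemma joinSummand_of_lt (h : j < l) : joinSummand x y l j = x j := by
  simp [joinSummand, h]

lemma joinSummand_self : joinSummand x y l l = CubeF.mid := by
  simp [joinSummand]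

lemma joinSummand_of_gt (h : l < j) : joinSummand x y l j = y j := by
  simp [joinSummand, not_lt.2 h.le, h.ne']

lemma cubeLe.of_joinCoeff_ne_zero (hxy : cubeLe x y) (h : joinCoeff x y l ≠ 0) :
    x l = CubeF.zero ∧ y l = CubeF.one ∧ (∀ j, j < l → y j ≠ CubeF.mid) ∧
      (∀ j, l < j → x j ≠ CubeF.mid) := by
  unfold joinCoeff at h
  split_ifs at h with hcond
  · obtain ⟨hx, hy⟩ := hxy.eq_zero_and_eq_one_of_joinF_ne_zero (by simpa using h)
    exact ⟨hx, hy, hcond⟩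
  · simp at h

lemma cubeLe.joinSummand_cubeLe (hxy : cubeLe x y) (hy : y l = CubeF.one) :
    cubeLe (joinSummand x y l) y := by
  intro j
  rcases lt_trichotomy j l with h | rfl | h
  · rw [joinSummand_of_lt h]; exact hxy j
  · rw [joinSummand_self, hy]; decide
  · rw [joinSummand_of_gt h]

lemma mem_support_cubeJoinFun {z : CubeB n} (hz : z ∈ (cubeJoinFun n x y).support) :
    ∃ l, joinCoeff x y l ≠ 0 ∧ joinSummand x y l = z := by
  rw [cubeJoinFun_eq_sum] at hz
  obtain ⟨l, -, hl⟩ := Finset.mem_biUnion.1 (support_finsetSum (support_smul hz))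
  refine ⟨l, fun h0 => by simp [h0] at hl, ?_⟩
  exact (Finset.mem_singleton.1 (support_single_subset (support_smul hl))).symm

lemma cubeLe.of_mem_support_cubeJoinFun (hxy : cubeLe x y) {z : CubeB n}
    (hz : z ∈ (cubeJoinFun n x y).support) : cubeLe z y := by
  obtain ⟨l, hl, rfl⟩ := mem_support_cubeJoinFun hz
  exact hxy.joinSummand_cubeLe (hxy.of_joinCoeff_ne_zero hl).2.1

end JoinSummand

/-- The index of the only summand of `x ∗ y` that can survive `CS`. -/
structure IsJoinPivot (x y : CubeB n) (l : Fin n) : Prop where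
  left_eq_zero : x l = CubeF.zero
  right_eq_one : y l = CubeF.one
  left_ne_zero_of_lt : ∀ j, j < l → x j ≠ CubeF.zero
  lt_of_right_eq_mid : ∀ j, y j = CubeF.mid → l < j

section Pivot

variable {x y : CubeB n} {l : Fin n}

lemma cubeLe.isJoinPivot_of_not_hasZeroBeforeMid (hxy : cubeLe x y) (hl : joinCoeff x y l ≠ 0)
    (hz : ¬ HasZeroBeforeMid (joinSummand x y l)) :
    ¬ HasZeroBeforeMid x ∧ ¬ HasZeroBeforeMid y ∧ IsJoinPivot x y l := by
  obtain ⟨hx0, hy1, hy, hx⟩ := hxy.of_joinCoeff_ne_zero hl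
  have hx_before : ∀ j, j < l → x j ≠ CubeF.zero := fun j hj hxj =>
    hz ⟨j, l, hj, by rwa [joinSummand_of_lt hj], joinSummand_self⟩
  have hx_mid : ∀ j, x j = CubeF.mid → j < l := fun j hj => by
    rcases lt_trichotomy j l with h | rfl | h
    · exact h
    · simp [hx0] at hj
    · exact absurd hj (hx j h)
  have hy_mid : ∀ j, y j = CubeF.mid → l < j := fun j hj => by
    rcases lt_trichotomy j l with h | rfl | h
    · exact absurd hj (hy j h)
    · simp [hy1] at hj
    · exact h
  refine ⟨fun ⟨i, j, hij, hxi, hxj⟩ => hx_before i (hij.trans (hx_mid j hxj)) hxi, ?_,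
    hx0, hy1, hx_before, hy_mid⟩
  rintro ⟨i, j, hij, hyi, hyj⟩
  refine hz ⟨i, j, hij, ?_, by rwa [joinSummand_of_gt (hy_mid j hyj)]⟩
  rcases lt_trichotomy i l with h | rfl | h
  · rw [joinSummand_of_lt h]; exact hxy.eq_zero hyi
  · simp [hy1] at hyi
  · rwa [joinSummand_of_gt h]

lemma cubeLe.joinCoeff_smul_csFun_joinSummand (hxy : cubeLe x y)
    (h : ¬ (¬ HasZeroBeforeMid x ∧ ¬ HasZeroBeforeMid y ∧ IsJoinPivot x y l)) :
    joinCoeff x y l • csFun n (joinSummand x y l) = 0 := by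
  by_cases hl : joinCoeff x y l = 0
  · rw [hl, zero_smul]
  · rw [csFun_def, if_pos (not_not.1 fun hz => h (hxy.isJoinPivot_of_not_hasZeroBeforeMid hl hz)),
      smul_zero]

namespace IsJoinPivot

lemma unique {l' : Fin n} (hl : IsJoinPivot x y l) (hl' : IsJoinPivot x y l') : l = l' := by
  rcases lt_trichotomy l l' with h | h | h
  · exact absurd hl.left_eq_zero (hl'.left_ne_zero_of_lt l h)
  · exact h
  · exact absurd hl'.left_eq_zero (hl.left_ne_zero_of_lt l' h)

lemma pIdx_left (hl : IsJoinPivot x y l) : pIdx x = l.castSucc :=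
  pIdx_eq (fun j hj => hl.left_ne_zero_of_lt j hj) fun _ => hl.left_eq_zero

lemma lt_pIdx_right (hl : IsJoinPivot x y l) (hxy : cubeLe x y) : (l : ℕ) < pIdx y := by
  have hle : l.castSucc ≤ pIdx y := hl.pIdx_left ▸ hxy.pIdx_le_pIdx
  rw [Fin.le_def, Fin.val_castSucc] at hle
  refine lt_of_le_of_ne hle fun he => ?_
  have h0 := eq_zero_at_pIdx (x := y) (he ▸ l.isLt)
  rw [show (⟨pIdx y, _⟩ : Fin n) = l from Fin.ext he.symm, hl.right_eq_one] at h0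
  exact CubeF.noConfusion h0

lemma joinCoeff_eq_one (hl : IsJoinPivot x y l) (hx : ¬ HasZeroBeforeMid x) :
    joinCoeff x y l = 1 := by
  have hcond : (∀ j, j < l → y j ≠ CubeF.mid) ∧ (∀ j, l < j → x j ≠ CubeF.mid) :=
    ⟨fun j hj hyj => (hl.lt_of_right_eq_mid j hyj).asymm hj,
      fun j hj hxj => hx ⟨l, j, hj, hl.left_eq_zero, hxj⟩⟩
  rw [joinCoeff, if_pos hcond, hl.left_eq_zero, hl.right_eq_one]
  rfl

lemma lt_of_mem_csSet (hl : IsJoinPivot x y l) (hxy : cubeLe x y) (hx : ¬ HasZeroBeforeMid x)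
    {a b : Fin (n + 1)} (ha : a ∈ csSet x) (hb : b ∈ csSet y) : a < b := by
  have hal : (a : ℕ) ≤ l := by
    rcases mem_csSet.1 ha with rfl | ⟨i, hi, rfl⟩
    · simp [hl.pIdx_left]
    · simpa [hl.pIdx_left] using (lt_pIdx_of_eq_mid hx hi).le
  have hlb : (l : ℕ) < b := by
    rcases mem_csSet.1 hb with rfl | ⟨i, hi, rfl⟩
    · exact hl.lt_pIdx_right hxy
    · simpa using hl.lt_of_right_eq_mid i hi
  exact Fin.lt_def.2 (by omega)

lemma not_hasZeroBeforeMid_joinSummand (hl : IsJoinPivot x y l) (hy : ¬ HasZeroBeforeMid y) :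
    ¬ HasZeroBeforeMid (joinSummand x y l) := by
  rintro ⟨i, j, hij, hi, hj⟩
  rcases lt_trichotomy i l with h | rfl | h
  · rw [joinSummand_of_lt h] at hi
    exact hl.left_ne_zero_of_lt i h hi
  · simp [joinSummand_self] at hi
  · rw [joinSummand_of_gt h] at hi
    rw [joinSummand_of_gt (h.trans hij)] at hj
    exact hy ⟨i, j, hij, hi, hj⟩

lemma mids_joinSummand (hl : IsJoinPivot x y l) (hx : ¬ HasZeroBeforeMid x) :
    mids (joinSummand x y l) = insert l (mids x ∪ mids y) := by
  ext i
  simp only [mem_mids, Finset.mem_insert, Finset.mem_union]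
  rcases lt_trichotomy i l with h | rfl | h
  · have := hl.lt_of_right_eq_mid i
    rw [joinSummand_of_lt h]
    constructor
    · exact fun h' => Or.inr (Or.inl h')
    · rintro (rfl | h' | h')
      exacts [absurd h (lt_irrefl _), h', absurd (this h') h.asymm]
  · simp [joinSummand_self]
  · rw [joinSummand_of_gt h]
    constructor
    · exact fun h' => Or.inr (Or.inr h')
    · rintro (rfl | h' | h')
      exacts [absurd h (lt_irrefl _), absurd ⟨l, i, h, hl.left_eq_zero, h'⟩ hx, h']

lemma pIdx_joinSummand (hl : IsJoinPivot x y l) (hxy : cubeLe x y) :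
    pIdx (joinSummand x y l) = pIdx y := by
  have hly := hl.lt_pIdx_right hxy
  refine pIdx_eq (fun j hj => ?_) fun h => ?_
  · rcases lt_trichotomy j l with h | rfl | h
    · rw [joinSummand_of_lt h]; exact hl.left_ne_zero_of_lt j h
    · simp [joinSummand_self]
    · rw [joinSummand_of_gt h]; exact ne_zero_of_lt_pIdx hj
  · rw [joinSummand_of_gt (Fin.lt_def.2 hly)]
    exact eq_zero_at_pIdx h

lemma csSet_joinSummand (hl : IsJoinPivot x y l) (hxy : cubeLe x y)
    (hx : ¬ HasZeroBeforeMid x) : csSet (joinSummand x y l) = csSet x ∪ csSet y := by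
  rw [csSet, csSet, csSet, pIdx_joinSummand hl hxy, ← mids, ← mids, ← mids,
    mids_joinSummand hl hx, hl.pIdx_left, Finset.image_insert, Finset.image_union]
  ext a
  simp only [Finset.mem_insert, Finset.mem_union]
  tauto

end IsJoinPivot

end Pivot

lemma cubeLe.exists_isJoinPivot {x y : CubeB n} (hxy : cubeLe x y)
    (hdisj : Disjoint (csSet x) (csSet y)) : ∃ l, IsJoinPivot x y l := by
  have hne : ∀ a, a ∈ csSet x → a ∉ csSet y := fun _ ha => Finset.disjoint_left.1 hdisj ha
  have hpIdx_ne : pIdx y ≠ pIdx x := fun he =>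
    hne _ (pIdx_mem_csSet x) (he ▸ pIdx_mem_csSet y)
  have hpx : (pIdx x : ℕ) < n := by
    refine lt_of_le_of_ne (Nat.lt_succ_iff.1 (pIdx x).isLt) fun hxn => hpIdx_ne ?_
    refine le_antisymm (Fin.le_def.2 (by omega)) hxy.pIdx_le_pIdx
  set l : Fin n := ⟨pIdx x, hpx⟩
  have hcast : l.castSucc = pIdx x := rfl
  have hy1 : y l = CubeF.one := by
    cases hyl : y l with
    | zero => exact absurd (le_antisymm (hcast ▸ pIdx_le hyl) hxy.pIdx_le_pIdx) hpIdx_ne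
    | mid => exact absurd (mem_csSet.2 (Or.inr ⟨l, hyl, hcast⟩)) (hne _ (pIdx_mem_csSet x))
    | one => rfl
  refine ⟨l, eq_zero_at_pIdx hpx, hy1, fun j hj => ne_zero_of_lt_pIdx hj, fun j hyj => ?_⟩
  cases hxj : x j with
  | zero =>
    refine lt_of_le_of_ne (Fin.le_def.2 (pIdx_le hxj)) fun he => ?_
    rw [← he, hy1] at hyj
    exact CubeF.noConfusion hyj
  | mid =>
    exact absurd (mem_csSet.2 (Or.inr ⟨j, hyj, rfl⟩)) (hne _ (mem_csSet.2 (Or.inr ⟨j, hxj, rfl⟩)))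
  | one =>
    rw [hxy.eq_one hxj] at hyj
    exact CubeF.noConfusion hyj

section SimplicialJoin

variable {s t : SimpB n}

lemma simpJoinFun_of_not_disjoint (h : ¬ Disjoint s t) : simpJoinFun n s t = 0 := by
  rw [simpJoinFun, if_neg fun h' => h (Finset.disjoint_iff_inter_eq_empty.2 h'.1)]

lemma simpJoinFun_of_forall_lt (hs : s.Nonempty) (ht : t.Nonempty)
    (hst : ∀ a ∈ s, ∀ b ∈ t, a < b) :
    simpJoinFun n s t = ((-1 : ℤ) ^ (s.card - 1)) • single (s ∪ t) 1 := by
  have hdisj : s ∩ t = ∅ := Finset.disjoint_iff_inter_eq_empty.1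
    (Finset.disjoint_left.2 fun a ha hat => lt_irrefl a (hst a ha a hat))
  have hinv : ((s ×ˢ t).filter fun p => p.2 < p.1) = ∅ :=
    Finset.filter_eq_empty_iff.2 fun p hp => by
      rw [Finset.mem_product] at hp
      exact (hst _ hp.1 _ hp.2).asymm
  rw [simpJoinFun, if_pos ⟨hdisj, hs, ht⟩, hinv, Finset.card_empty, add_zero]

lemma simpJoinC_zero_left (b : SimpChain n) : simpJoinC n 0 b = 0 := by
  simp [simpJoinC]

lemma simpJoinC_zero_right (a : SimpChain n) : simpJoinC n a 0 = 0 := by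
  simp [simpJoinC]

lemma simpJoinC_single_single : simpJoinC n (single s 1) (single t 1) = simpJoinFun n s t := by
  simp [simpJoinC]

lemma simpJoinC_eq_lift (a b : SimpChain n) :
    simpJoinC n a b = Finsupp.lift _ ℤ _ (fun s => b.sum fun t u => u • simpJoinFun n s t) a := by
  simp only [Finsupp.lift_apply, simpJoinC, Finsupp.smul_sum, smul_smul]

end SimplicialJoin

theorem cubeLe.csL_cubeJoinFun {x y : CubeB n} (hxy : cubeLe x y) :
    csL n (cubeJoinFun n x y) = simpJoinC n (csFun n x) (csFun n y) := by
  have hsum : csL n (cubeJoinFun n x y) =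
      ((-1 : ℤ) ^ cubeDeg x) • ∑ l, joinCoeff x y l • csFun n (joinSummand x y l) := by
    simp only [cubeJoinFun_eq_sum, map_smul, map_sum, csL_single]
  rw [hsum]
  by_cases hx : HasZeroBeforeMid x
  · rw [Finset.sum_eq_zero fun l _ => hxy.joinCoeff_smul_csFun_joinSummand fun h => h.1 hx,
      smul_zero, csFun_def x, if_pos hx, simpJoinC_zero_left]
  by_cases hy : HasZeroBeforeMid y
  · rw [Finset.sum_eq_zero fun l _ => hxy.joinCoeff_smul_csFun_joinSummand fun h => h.2.1 hy,
      smul_zero, csFun_def y, if_pos hy, simpJoinC_zero_right]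
  rw [csFun_def x, if_neg hx, csFun_def y, if_neg hy, simpJoinC_single_single]
  by_cases hdisj : Disjoint (csSet x) (csSet y)
  · obtain ⟨l, hl⟩ := hxy.exists_isJoinPivot hdisj
    rw [Finset.sum_eq_single l
        (fun l' _ hne => hxy.joinCoeff_smul_csFun_joinSummand fun h => hne (h.2.2.unique hl))
        (by simp),
      hl.joinCoeff_eq_one hx, one_smul, csFun_def, if_neg (hl.not_hasZeroBeforeMid_joinSummand hy),
      hl.csSet_joinSummand hxy hx,
      simpJoinFun_of_forall_lt (csSet_nonempty x) (csSet_nonempty y)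
        fun a ha b hb => hl.lt_of_mem_csSet hxy hx ha hb,
      card_csSet hx, Nat.add_sub_cancel]
  · rw [simpJoinFun_of_not_disjoint hdisj, Finset.sum_eq_zero fun l _ =>
      hxy.joinCoeff_smul_csFun_joinSummand fun h => hdisj (Finset.disjoint_left.2
        fun a ha hb => lt_irrefl a (h.2.2.lt_of_mem_csSet hxy hx ha hb)), smul_zero]

section Linearity

variable {a : CubeChain n} {y : CubeB n}

lemma cubeJoinC_single_right (a : CubeChain n) (y : CubeB n) :
    cubeJoinC n a (single y 1) = a.sum fun x r => r • cubeJoinFun n x y := by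
  simp [cubeJoinC]

lemma csL_cubeJoinC_single (h : ∀ x ∈ a.support, cubeLe x y) :
    csL n (cubeJoinC n a (single y 1)) = simpJoinC n (csL n a) (csFun n y) := by
  have hcsL : csL n a = a.sum fun x r => r • csFun n x := Finsupp.lift_apply ..
  rw [simpJoinC_eq_lift, hcsL, map_finsuppSum, cubeJoinC_single_right, map_finsuppSum]
  refine Finsupp.sum_congr fun x hx => ?_
  rw [map_smul, map_smul, (h x hx).csL_cubeJoinFun, ← simpJoinC_eq_lift]

lemma cubeLe_of_mem_support_cubeJoinC_single (h : ∀ x ∈ a.support, cubeLe x y) :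
    ∀ z ∈ (cubeJoinC n a (single y 1)).support, cubeLe z y := by
  intro z hz
  rw [cubeJoinC_single_right] at hz
  obtain ⟨x, hx, hzx⟩ := Finset.mem_biUnion.1 (support_finsetSum hz)
  exact (h x hx).of_mem_support_cubeJoinFun (support_smul hzx)

end Linearity

lemma foldJoin_concat {C : Type*} (join : C → C → C) (z : C) {l : List C} (hl : l ≠ [])
    (a : C) : foldJoin join z (l.concat a) = join (foldJoin join z l) a := by
  cases l with
  | nil => exact absurd rfl hl
  | cons b t => simp [foldJoin]

lemma iterCubeJoin_zero (f : Fin 1 → CubeB n) : iterCubeJoin n 0 f = single (f 0) 1 := by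
  simp [iterCubeJoin, foldJoin]

lemma iterCubeJoin_succ {k : ℕ} (f : Fin (k + 2) → CubeB n) :
    iterCubeJoin n (k + 1) f =
      cubeJoinC n (iterCubeJoin n k fun i => f i.castSucc) (single (f (Fin.last (k + 1))) 1) := by
  rw [iterCubeJoin, List.ofFn_succ', foldJoin_concat _ _ (by simp)]
  rfl

lemma iterSimpJoin_zero (g : Fin 1 → SimpChain n) : iterSimpJoin n 0 g = g 0 := by
  simp [iterSimpJoin, foldJoin]

lemma iterSimpJoin_succ {k : ℕ} (g : Fin (k + 2) → SimpChain n) :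
    iterSimpJoin n (k + 1) g =
      simpJoinC n (iterSimpJoin n k fun i => g i.castSucc) (g (Fin.last (k + 1))) := by
  rw [iterSimpJoin, List.ofFn_succ', foldJoin_concat _ _ (by simp)]
  rfl

lemma cubeLe_of_mem_support_iterCubeJoin {k : ℕ} {f : Fin (k + 1) → CubeB n}
    (hf : ∀ i j : Fin (k + 1), i ≤ j → cubeLe (f i) (f j)) :
    ∀ z ∈ (iterCubeJoin n k f).support, cubeLe z (f (Fin.last k)) := by
  induction k with
  | zero =>
    intro z hz
    rw [iterCubeJoin_zero] at hz
    rw [Finset.mem_singleton.1 (support_single_subset hz)]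
    exact cubeLe_refl _
  | succ k ih =>
    rw [iterCubeJoin_succ]
    refine cubeLe_of_mem_support_cubeJoinC_single fun z hz => ?_
    exact (ih (fun i j hij => hf _ _ (Fin.castSucc_le_castSucc_iff.2 hij)) z hz).trans
      (hf _ _ (Fin.le_last _))

end CartanSerre

open CartanSerre in
/-- For basis elements `x⁽¹⁾ ≤ ⋯ ≤ x⁽ᵏ⁺¹⁾` of `C(□^n)`,
`CS(∗^k(x⁽¹⁾ ⊗ ⋯ ⊗ x⁽ᵏ⁺¹⁾)) = ∗^k(CS(x⁽¹⁾) ⊗ ⋯ ⊗ CS(x⁽ᵏ⁺¹⁾))`, where `∗^k` is the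
left-parenthesized iterated join (cubical on the left, simplicial on the right). -/
theorem cartanSerre_iterJoin_of_monotone (n k : ℕ) (f : Fin (k + 1) → CubeB n)
    (hf : ∀ i j : Fin (k + 1), i ≤ j → cubeLe (f i) (f j)) :
    csL n (iterCubeJoin n k f) = iterSimpJoin n k (fun i => csFun n (f i)) := by
  induction k with
  | zero => rw [iterCubeJoin_zero, csL_single, iterSimpJoin_zero]
  | succ k ih =>
    have hinit : ∀ i j : Fin (k + 1), i ≤ j → cubeLe (f i.castSucc) (f j.castSucc) :=
      fun i j hij => hf _ _ (Fin.castSucc_le_castSucc_iff.2 hij)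
    have hsupp : ∀ z ∈ (iterCubeJoin n k fun i => f i.castSucc).support,
        cubeLe z (f (Fin.last (k + 1))) := fun z hz =>
      (cubeLe_of_mem_support_iterCubeJoin hinit z hz).trans (hf _ _ (Fin.le_last _))
    rw [iterCubeJoin_succ, csL_cubeJoinC_single hsupp, ih _ hinit, iterSimpJoin_succ]
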